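/- arXiv:0706.0362 — 2 statements merged into one kernel-verified Lean document; each statement's English description precedes it below -/
import Mathlib

section
/- Let Λ be a k-graph, G a group, and c : Λ → G a cocycle. For every infinite path x ∈ Λ^∞ and every g ∈ G there is a unique infinite path (x, g) ∈ (Λ ×_c G)^∞ of the skew product determined by (x, g)(0,m) = (x(0,m), c(x(0,m))^{-1} g) for all m ∈ ℕ^k. Its range is the vertex (x(0), g). -/
/-!
Paths of a `k`-graph are epimorphisms: the degree of the right factor of `f ≫ g` is forced, so
unique factorisation lets one cancel `f`.  Hence an infinite path is determined by its vertices
and its initial segments `x(0, m)`, since `x(p, q)` is the cofactor of `x(0, p)` in `x(0, q)`.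
Existence: `(x(p, q), c(x(0, q))⁻¹ g)` is a path of the skew product because
`c(x(0, q)) = c(x(0, p)) c(x(p, q))`.
-/

open CategoryTheory

attribute [local instance 2000] Preorder.smallCategory

/-- A `k`-graph: a small category `Λ` equipped with a degree functor `d : Λ → ℕᵏ`
satisfying the unique factorisation property.  Morphisms point from the range of a path
to its source, so that `f ≫ g` corresponds to the composition `fg` of paths in the
`k`-graph literature (with `r (f ≫ g) = r f` and `s (f ≫ g) = s g`). -/
structure KGraph (k : ℕ) (Λ : Type) [SmallCategory Λ] : Type where
  deg : ∀ {a b : Λ}, (a ⟶ b) → Fin k → ℕ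
  deg_id : ∀ a : Λ, deg (𝟙 a) = 0
  deg_comp : ∀ {a b c : Λ} (f : a ⟶ b) (g : b ⟶ c), deg (f ≫ g) = deg f + deg g
  factor : ∀ {a b : Λ} (f : a ⟶ b) (m n : Fin k → ℕ), deg f = m + n →
    ∃! t : Σ c : Λ, (a ⟶ c) × (c ⟶ b),
      deg t.2.1 = m ∧ deg t.2.2 = n ∧ t.2.1 ≫ t.2.2 = f

/-- An infinite path in a `k`-graph: a degree-preserving functor `Ω_k → Λ`, where `Ω_k`
is realised as the preorder category on `ℕᵏ = Fin k → ℕ`; the morphism `(p, q)` (for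
`p ≤ q`) is `homOfLE h : p ⟶ q` and must be sent to a path of degree `q - p`.
The range of the path is `P.obj 0`. -/
structure InfPath {k : ℕ} {Λ : Type} [SmallCategory Λ] (KG : KGraph k Λ) : Type where
  P : (Fin k → ℕ) ⥤ Λ
  deg_eq : ∀ {p q : Fin k → ℕ} (h : p ≤ q), KG.deg (P.map (homOfLE h)) = q - p

/-- Translation by `n` on `ℕᵏ`, as a functor. -/
def transFunctor (k : ℕ) (n : Fin k → ℕ) : (Fin k → ℕ) ⥤ (Fin k → ℕ) where
  obj p := p + n
  map f := homOfLE (add_le_add (leOfHom f) (le_refl n))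
  map_id _ := rfl
  map_comp _ _ := rfl

/-- The shift `σⁿ x` of an infinite path `x`, satisfying `σⁿ x (p, q) = x (p + n, q + n)`. -/
def InfPath.shift {k : ℕ} {Λ : Type} [SmallCategory Λ] {KG : KGraph k Λ}
    (x : InfPath KG) (n : Fin k → ℕ) : InfPath KG where
  P := transFunctor k n ⋙ x.P
  deg_eq {p q} h := by
    have h1 : (transFunctor k n ⋙ x.P).map (homOfLE h)
        = x.P.map (homOfLE (add_le_add h (le_refl n))) := rfl
    rw [h1]
    refine (x.deg_eq (add_le_add h (le_refl n))).trans ?_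
    funext i
    simp only [Pi.sub_apply, Pi.add_apply]
    omega

/-- A cocycle on a `k`-graph: a functor `c : Λ → G` into a group `G` (viewed as a category
with one object).  With our orientation of arrows, `c (f ≫ g) = c f * c g`. -/
structure Cocycle (Λ : Type) [SmallCategory Λ] (G : Type) [Group G] : Type where
  c : ∀ {a b : Λ}, (a ⟶ b) → G
  map_id : ∀ a : Λ, c (𝟙 a) = 1
  map_comp : ∀ {a b d : Λ} (f : a ⟶ b) (g : b ⟶ d), c (f ≫ g) = c f * c g

/-- The skew product `Λ ×_c G`: vertices are pairs `(v, g)`, and `(λ, g)` is a path with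
source `(s λ, g)` and range `(r λ, c(λ) g)`.  Here a morphism from `(a, h)` to `(b, g)` is
a path `f : a ⟶ b` with `c f * g = h`. -/
structure Skew {Λ : Type} [SmallCategory Λ] {G : Type} [Group G] (σ : Cocycle Λ G) : Type where
  base : Λ
  grp : G

instance Skew.instCategory {Λ : Type} [SmallCategory Λ] {G : Type} [Group G]
    (σ : Cocycle Λ G) : SmallCategory (Skew σ) where
  Hom a b := {f : a.base ⟶ b.base // σ.c f * b.grp = a.grp}
  id a := ⟨𝟙 a.base, by rw [σ.map_id, one_mul]⟩
  comp f g := ⟨f.1 ≫ g.1, by rw [σ.map_comp, mul_assoc, g.2, f.2]⟩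
  id_comp f := by apply Subtype.ext; exact Category.id_comp f.1
  comp_id f := by apply Subtype.ext; exact Category.comp_id f.1
  assoc f g h := by apply Subtype.ext; exact Category.assoc f.1 g.1 h.1

/-- The `k`-graph structure on the skew product `Λ ×_c G`. -/
def skewKGraph {k : ℕ} {Λ : Type} [SmallCategory Λ] (KG : KGraph k Λ) {G : Type} [Group G]
    (σ : Cocycle Λ G) : KGraph k (Skew σ) where
  deg f := KG.deg f.1
  deg_id a := KG.deg_id a.base
  deg_comp f g := KG.deg_comp f.1 g.1
  factor := by
    rintro a b f m n hmn
    obtain ⟨⟨c0, g0, h0⟩, ⟨hgm, hhn, hgh⟩, huniq⟩ := KG.factor f.1 m n hmn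
    refine ⟨⟨⟨c0, (σ.c g0)⁻¹ * a.grp⟩, ⟨g0, mul_inv_cancel_left _ _⟩, ⟨h0, ?_⟩⟩,
      ⟨hgm, hhn, Subtype.ext hgh⟩, ?_⟩
    · rw [← f.2, ← hgh, σ.map_comp, mul_assoc, inv_mul_cancel_left]
    · rintro ⟨⟨c1, x1⟩, ⟨g1, hg1⟩, ⟨h1, hh1⟩⟩ ⟨hm1, hn1, hcomp1⟩
      have hbase : (⟨c0, g0, h0⟩ : Σ c : Λ, (a.base ⟶ c) × (c ⟶ b.base)) = ⟨c1, g1, h1⟩ :=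
        (huniq ⟨c1, g1, h1⟩ ⟨hm1, hn1, congrArg Subtype.val hcomp1⟩).symm
      obtain ⟨h1', h2'⟩ := Sigma.mk.inj_iff.mp hbase
      subst h1'
      obtain ⟨h3', h4'⟩ := Prod.mk.inj (eq_of_heq h2')
      subst h3'
      subst h4'
      have hx : x1 = (σ.c g0)⁻¹ * a.grp := by rw [← hg1, inv_mul_cancel_left]
      subst hx
      rfl

section

variable {k : ℕ} {Λ : Type} [SmallCategory Λ]

theorem KGraph.epi (KG : KGraph k Λ) {a b : Λ} (f : a ⟶ b) : Epi f := by
  refine ⟨fun {c} g g' hgg' => ?_⟩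
  have hdeg : KG.deg g' = KG.deg g :=
    add_left_cancel (a := KG.deg f) (by rw [← KG.deg_comp, ← KG.deg_comp, hgg'])
  have h := (KG.factor (f ≫ g) _ _ (KG.deg_comp f g)).unique
    (y₁ := ⟨b, f, g⟩) (y₂ := ⟨b, f, g'⟩) ⟨rfl, rfl, rfl⟩ ⟨rfl, hdeg, hgg'.symm⟩
  exact (Prod.mk.inj (eq_of_heq (Sigma.mk.inj_iff.mp h).2)).2

theorem KGraph.heq_of_comp_heq (KG : KGraph k Λ) {a b c a' b' c' : Λ}
    (ha : a = a') (hb : b = b') (hc : c = c') {f : a ⟶ b} {g : b ⟶ c} {f' : a' ⟶ b'}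
    {g' : b' ⟶ c'} (hf : f ≍ f') (hfg : f ≫ g ≍ f' ≫ g') : g ≍ g' := by
  subst ha hb hc
  obtain rfl := eq_of_heq hf
  exact heq_of_eq ((KG.epi f).left_cancellation _ _ (eq_of_heq hfg))

theorem InfPath.ext_of_heq_map_zero {KG : KGraph k Λ} {x y : InfPath KG}
    (hobj : ∀ m, x.P.obj m = y.P.obj m)
    (hmap : ∀ m, x.P.map (homOfLE (zero_le : (0 : Fin k → ℕ) ≤ m)) ≍
      y.P.map (homOfLE (zero_le : (0 : Fin k → ℕ) ≤ m))) :
    x = y := by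
  have hP : x.P = y.P := Functor.hext hobj fun p q f => by
    have hx : x.P.map (homOfLE (zero_le : (0 : Fin k → ℕ) ≤ p)) ≫ x.P.map f =
        x.P.map (homOfLE (zero_le : (0 : Fin k → ℕ) ≤ q)) := by
      rw [← x.P.map_comp]; rfl
    have hy : y.P.map (homOfLE (zero_le : (0 : Fin k → ℕ) ≤ p)) ≫ y.P.map f =
        y.P.map (homOfLE (zero_le : (0 : Fin k → ℕ) ≤ q)) := by
      rw [← y.P.map_comp]; rfl
    exact KG.heq_of_comp_heq (hobj 0) (hobj p) (hobj q) (hmap p) (by rw [hx, hy]; exact hmap q)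
  cases x; cases y; cases hP; rfl

theorem Skew.hom_heq_of_heq_val {G : Type} [Group G] {σ : Cocycle Λ G} {a b a' b' : Skew σ}
    (ha : a = a') (hb : b = b') {f : a ⟶ b} {f' : a' ⟶ b'} (h : f.1 ≍ f'.1) : f ≍ f' := by
  subst ha hb
  exact heq_of_eq (Subtype.ext (eq_of_heq h))

def InfPath.skewLift {KG : KGraph k Λ} {G : Type} [Group G] (σ : Cocycle Λ G)
    (x : InfPath KG) (g : G) : InfPath (skewKGraph KG σ) where
  P :=
    { obj m := ⟨x.P.obj m, (σ.c (x.P.map (homOfLE (zero_le : (0 : Fin k → ℕ) ≤ m))))⁻¹ * g⟩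
      map {p q} f := ⟨x.P.map f, by
        have hc : σ.c (x.P.map (homOfLE (zero_le : (0 : Fin k → ℕ) ≤ q))) =
            σ.c (x.P.map (homOfLE (zero_le : (0 : Fin k → ℕ) ≤ p))) * σ.c (x.P.map f) := by
          rw [← σ.map_comp, ← x.P.map_comp]; rfl
        change σ.c (x.P.map f) * ((σ.c _)⁻¹ * g) = (σ.c _)⁻¹ * g
        rw [hc]
        group⟩
      map_id p := Subtype.ext (x.P.map_id p)
      map_comp f g := Subtype.ext (x.P.map_comp f g) }
  deg_eq h := x.deg_eq h

theorem InfPath.skewLift_obj_zero {KG : KGraph k Λ} {G : Type} [Group G] (σ : Cocycle Λ G)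
    (x : InfPath KG) (g : G) : (x.skewLift σ g).P.obj 0 = ⟨x.P.obj 0, g⟩ := by
  change (⟨_, (σ.c (x.P.map (𝟙 0)))⁻¹ * g⟩ : Skew σ) = _
  rw [x.P.map_id, σ.map_id, inv_one, one_mul]

end

/-- Let `c` be a cocycle on a `k`-graph `Λ` with values in a group `G`.
For every infinite path `x ∈ Λ^∞` and every `g ∈ G` there is a unique infinite path
`(x, g)` of the skew product `Λ ×_c G` with `(x, g)(0, m) = (x(0, m), c(x(0, m))⁻¹ g)`
for all `m ∈ ℕᵏ`; its range is the vertex `(x(0), g)`. -/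
theorem stmt10 {k : ℕ} {Λ : Type} [SmallCategory Λ] (KG : KGraph k Λ) {G : Type} [Group G]
    (σ : Cocycle Λ G) (x : InfPath KG) (g : G) :
    ∃! y : InfPath (skewKGraph KG σ),
      (∀ m : Fin k → ℕ,
        y.P.obj m = ⟨x.P.obj m, (σ.c (x.P.map (homOfLE (zero_le : (0 : Fin k → ℕ) ≤ m))))⁻¹ * g⟩) ∧
      (∀ m : Fin k → ℕ,
        HEq (y.P.map (homOfLE (zero_le : (0 : Fin k → ℕ) ≤ m))).1 (x.P.map (homOfLE (zero_le : (0 : Fin k → ℕ) ≤ m)))) ∧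
      y.P.obj 0 = ⟨x.P.obj 0, g⟩ := by
  refine ⟨x.skewLift σ g, ⟨fun _ => rfl, fun _ => HEq.rfl, x.skewLift_obj_zero σ g⟩, ?_⟩
  rintro y ⟨hobj, hmap, -⟩
  exact InfPath.ext_of_heq_map_zero hobj fun m =>
    Skew.hom_heq_of_heq_val (hobj 0) (hobj m) (hmap m)
end

section
/- Let p_n : Λ_{n+1} → Λ_n (n ≥ 1) be a sequence of row-finite coverings of k-graphs with no sources. Then varprojlim(Λ_i, p_i), with coordinatewise composition, identities, range and source, is a small category, and the map d̃((λ_i)_{i≥1}) := d(λ_1) is a functor to ℕ^k satisfying d̃((λ_i)) = d(λ_j) for all j and the factorisation property: for every λ = (λ_i) ∈ varprojlim(Λ_i, p_i) with d̃(λ) = m + n there exist unique elements λ(0,m) := (λ_i(0,m))_{i≥1} of degree m and λ(m,m+n) := (λ_i(m,m+n))_{i≥1} of degree n in varprojlim(Λ_i, p_i) such that λ = λ(0,m)·λ(m,m+n). -/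
open CategoryTheory

attribute [local instance 2000] Preorder.smallCategory

/-- A covering of `k`-graphs: a degree-preserving functor `p : Γ → Λ` which is surjective
on paths and restricts to bijections `vΓ → p(v)Λ` and `Γv → Λp(v)` for every vertex `v`. -/
structure IsCovering {k : ℕ} {Γ Λ : Type} [SmallCategory Γ] [SmallCategory Λ]
    (KGΓ : KGraph k Γ) (KGΛ : KGraph k Λ) (p : Γ ⥤ Λ) : Prop where
  deg_map : ∀ {a b : Γ} (f : a ⟶ b), KGΛ.deg (p.map f) = KGΓ.deg f
  surj : Function.Surjective
    (fun t : Σ (a b : Γ), a ⟶ b => (⟨p.obj t.1, p.obj t.2.1, p.map t.2.2⟩ : Σ (a b : Λ), a ⟶ b))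
  bij_out : ∀ v : Γ, Function.Bijective
    (fun t : Σ b : Γ, (v ⟶ b) => (⟨p.obj t.1, p.map t.2⟩ : Σ b' : Λ, (p.obj v ⟶ b')))
  bij_in : ∀ v : Γ, Function.Bijective
    (fun t : Σ a : Γ, (a ⟶ v) => (⟨p.obj t.1, p.map t.2⟩ : Σ a' : Λ, (a' ⟶ p.obj v)))

/-- An object of the projective limit `varprojlim (Λᵢ, pᵢ)`: a compatible sequence of
vertices. -/
structure PLimObj (Λ : ℕ → Type) [∀ n, SmallCategory (Λ n)]
    (p : ∀ n, Λ (n + 1) ⥤ Λ n) : Type where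
  v : ∀ n, Λ n
  compat : ∀ n, (p n).obj (v (n + 1)) = v n

/-- A morphism of the projective limit `varprojlim (Λᵢ, pᵢ)`: a compatible sequence of
paths `λᵢ ∈ Λᵢ` with `pᵢ(λ_{i+1}) = λᵢ`. -/
@[ext]
structure PLimHom {Λ : ℕ → Type} [∀ n, SmallCategory (Λ n)]
    {p : ∀ n, Λ (n + 1) ⥤ Λ n} (a b : PLimObj Λ p) : Type where
  f : ∀ n, a.v n ⟶ b.v n
  compat : ∀ n, f n =
    eqToHom (a.compat n).symm ≫ (p n).map (f (n + 1)) ≫ eqToHom (b.compat n)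

/-- The projective limit `varprojlim (Λᵢ, pᵢ)` is a small category with coordinatewise
composition, identities, range and source. -/
instance PLimObj.instCategory (Λ : ℕ → Type) [∀ n, SmallCategory (Λ n)]
    (p : ∀ n, Λ (n + 1) ⥤ Λ n) : SmallCategory (PLimObj Λ p) where
  Hom a b := PLimHom a b
  id a := ⟨fun n => 𝟙 (a.v n), by intro n; simp⟩
  comp f g := ⟨fun n => f.f n ≫ g.f n, by
    intro n
    try dsimp only
    rw [f.compat n, g.compat n]
    simp⟩
  id_comp f := by apply PLimHom.ext; funext n; exact Category.id_comp (f.f n)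
  comp_id f := by apply PLimHom.ext; funext n; exact Category.comp_id (f.f n)
  assoc f g h := by apply PLimHom.ext; funext n; exact Category.assoc (f.f n) (g.f n) (h.f n)

/-- The degree map on `varprojlim (Λᵢ, pᵢ)`: the degree of the first component. -/
def dtilde {k : ℕ} {Λ : ℕ → Type} [∀ n, SmallCategory (Λ n)]
    {p : ∀ n, Λ (n + 1) ⥤ Λ n} (KGs : ∀ n, KGraph k (Λ n))
    {a b : PLimObj Λ p} (f : a ⟶ b) : Fin k → ℕ :=
  (KGs 0).deg (f.f 0)

/-! Every map `pᵢ` preserves degrees, so all coordinates of a path in the limit have the same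
degree. Pushing the unique `(m, n)`-factorisation of `λᵢ₊₁` down along `pᵢ` gives an
`(m, n)`-factorisation of `λᵢ`, hence the unique one; so the coordinatewise factorisations form
a compatible family, i.e. a factorisation in the limit, and any factorisation in the limit is
coordinatewise this one. -/

namespace KGraph

variable {k : ℕ} {Λ : Type} [SmallCategory Λ] (KG : KGraph k Λ)

def IsFactorisation {a b : Λ} (f : a ⟶ b) (m n : Fin k → ℕ)
    (t : Σ c : Λ, (a ⟶ c) × (c ⟶ b)) : Prop :=
  KG.deg t.2.1 = m ∧ KG.deg t.2.2 = n ∧ t.2.1 ≫ t.2.2 = f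

lemma deg_eqToHom_comp {a a' b : Λ} (e : a = a') (g : a' ⟶ b) :
    KG.deg (eqToHom e ≫ g) = KG.deg g := by
  subst e; rw [eqToHom_refl, Category.id_comp]

lemma deg_comp_eqToHom {a b b' : Λ} (e : b = b') (g : a ⟶ b) :
    KG.deg (g ≫ eqToHom e) = KG.deg g := by
  subst e; rw [eqToHom_refl, Category.comp_id]

end KGraph

section ComposablePair

variable {C : Type} [SmallCategory C] {a b : C} {s s' : Σ c : C, (a ⟶ c) × (c ⟶ b)}

lemma Sigma.composablePair_fst_eq (h : s = s') :
    s'.2.1 = s.2.1 ≫ eqToHom (congrArg Sigma.fst h) := by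
  subst h; simp

lemma Sigma.composablePair_snd_eq (h : s = s') :
    s'.2.2 = eqToHom (congrArg Sigma.fst h).symm ≫ s.2.2 := by
  subst h; simp

end ComposablePair

namespace PLimObj

variable {Λ : ℕ → Type} [∀ n, SmallCategory (Λ n)] {p : ∀ n, Λ (n + 1) ⥤ Λ n}
  {a b : PLimObj Λ p}

lemma ext_v {c c' : PLimObj Λ p} (h : c.v = c'.v) : c = c' := by
  cases c; cases c'; cases h; rfl

def pairAt (t : Σ c : PLimObj Λ p, (a ⟶ c) × (c ⟶ b)) (i : ℕ) :
    Σ c : Λ i, (a.v i ⟶ c) × (c ⟶ b.v i) :=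
  ⟨t.1.v i, t.2.1.f i, t.2.2.f i⟩

def pushPair (i : ℕ) (t : Σ c : Λ (i + 1), (a.v (i + 1) ⟶ c) × (c ⟶ b.v (i + 1))) :
    Σ c : Λ i, (a.v i ⟶ c) × (c ⟶ b.v i) :=
  ⟨(p i).obj t.1, eqToHom (a.compat i).symm ≫ (p i).map t.2.1,
    (p i).map t.2.2 ≫ eqToHom (b.compat i)⟩

lemma pair_ext {t t' : Σ c : PLimObj Λ p, (a ⟶ c) × (c ⟶ b)}
    (h : ∀ i, pairAt t i = pairAt t' i) : t = t' := by
  obtain ⟨c, g, g'⟩ := t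
  obtain ⟨c', e, e'⟩ := t'
  obtain rfl : c = c' := ext_v (funext fun i => congrArg Sigma.fst (h i))
  have hcoord i : g.f i = e.f i ∧ g'.f i = e'.f i := by
    simpa only [pairAt, Sigma.mk.inj_iff, heq_eq_eq, Prod.mk.injEq, true_and] using h i
  obtain rfl : g = e := PLimHom.ext (funext fun i => (hcoord i).1)
  obtain rfl : g' = e' := PLimHom.ext (funext fun i => (hcoord i).2)
  rfl

lemma exists_pairAt_eq (T : ∀ i, Σ c : Λ i, (a.v i ⟶ c) × (c ⟶ b.v i))
    (hT : ∀ i, pushPair i (T (i + 1)) = T i) :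
    ∃ t : Σ c : PLimObj Λ p, (a ⟶ c) × (c ⟶ b), ∀ i, pairAt t i = T i := by
  let c : PLimObj Λ p := ⟨fun i => (T i).1, fun i => congrArg Sigma.fst (hT i)⟩
  let g : a ⟶ c := ⟨fun i => (T i).2.1, fun i =>
    (Sigma.composablePair_fst_eq (hT i)).trans (Category.assoc _ _ _)⟩
  let g' : c ⟶ b := ⟨fun i => (T i).2.2, fun i => Sigma.composablePair_snd_eq (hT i)⟩
  exact ⟨⟨c, g, g'⟩, fun i => rfl⟩

end PLimObj

namespace PLimHom

variable {k : ℕ} {Λ : ℕ → Type} [∀ n, SmallCategory (Λ n)] {p : ∀ n, Λ (n + 1) ⥤ Λ n}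
  {KGs : ∀ n, KGraph k (Λ n)}
  (hdeg : ∀ n {a b : Λ (n + 1)} (f : a ⟶ b), (KGs n).deg ((p n).map f) = (KGs (n + 1)).deg f)
  {a b : PLimObj Λ p}
include hdeg

lemma deg_succ (f : a ⟶ b) (i : ℕ) : (KGs (i + 1)).deg (f.f (i + 1)) = (KGs i).deg (f.f i) := by
  rw [f.compat i, KGraph.deg_eqToHom_comp, KGraph.deg_comp_eqToHom, hdeg]

lemma dtilde_eq_deg (f : a ⟶ b) (i : ℕ) : dtilde KGs f = (KGs i).deg (f.f i) := by
  induction i with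
  | zero => rfl
  | succ i ih => rw [ih, deg_succ hdeg]

lemma isFactorisation_pushPair (f : a ⟶ b) {m n : Fin k → ℕ} (i : ℕ)
    {t : Σ c : Λ (i + 1), (a.v (i + 1) ⟶ c) × (c ⟶ b.v (i + 1))}
    (ht : (KGs (i + 1)).IsFactorisation (f.f (i + 1)) m n t) :
    (KGs i).IsFactorisation (f.f i) m n (PLimObj.pushPair i t) := by
  obtain ⟨hm, hn, hcomp⟩ := ht
  refine ⟨?_, ?_, ?_⟩
  · rw [PLimObj.pushPair, KGraph.deg_eqToHom_comp, hdeg, hm]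
  · rw [PLimObj.pushPair, KGraph.deg_comp_eqToHom, hdeg, hn]
  · simp only [PLimObj.pushPair, Category.assoc, ← Functor.map_comp_assoc, hcomp, f.compat i]

theorem existsUnique_factorisation (f : a ⟶ b) {m n : Fin k → ℕ} (hmn : dtilde KGs f = m + n) :
    ∃! t : Σ c : PLimObj Λ p, (a ⟶ c) × (c ⟶ b),
      ∀ i, (KGs i).IsFactorisation (f.f i) m n (PLimObj.pairAt t i) := by
  have hfac i : ∃! t, (KGs i).IsFactorisation (f.f i) m n t :=
    (KGs i).factor (f.f i) m n ((dtilde_eq_deg hdeg f i).symm.trans hmn)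
  choose T hT hTuniq using hfac
  have hcompat i : PLimObj.pushPair i (T (i + 1)) = T i :=
    hTuniq i _ (isFactorisation_pushPair hdeg f i (hT (i + 1)))
  obtain ⟨t, ht⟩ := PLimObj.exists_pairAt_eq T hcompat
  refine ⟨t, fun i => ht i ▸ hT i, fun t' ht' => PLimObj.pair_ext fun i => ?_⟩
  rw [ht, hTuniq i _ (ht' i)]

end PLimHom

theorem stmt15_general {k : ℕ} (Λ : ℕ → Type) [∀ n, SmallCategory (Λ n)]
    (p : ∀ n, Λ (n + 1) ⥤ Λ n) (KGs : ∀ n, KGraph k (Λ n))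
    (hcov : ∀ n, IsCovering (KGs (n + 1)) (KGs n) (p n)) :
    (∀ a : PLimObj Λ p, dtilde KGs (𝟙 a) = 0) ∧
    (∀ (a b c : PLimObj Λ p) (f : a ⟶ b) (g : b ⟶ c),
      dtilde KGs (f ≫ g) = dtilde KGs f + dtilde KGs g) ∧
    (∀ (a b : PLimObj Λ p) (f : a ⟶ b) (j : ℕ), dtilde KGs f = (KGs j).deg (f.f j)) ∧
    (∀ (a b : PLimObj Λ p) (f : a ⟶ b) (m n : Fin k → ℕ), dtilde KGs f = m + n →
      ∃! t : Σ c : PLimObj Λ p, (a ⟶ c) × (c ⟶ b),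
        dtilde KGs t.2.1 = m ∧ dtilde KGs t.2.2 = n ∧ t.2.1 ≫ t.2.2 = f ∧
        ∀ i : ℕ, (KGs i).deg (t.2.1.f i) = m ∧ (KGs i).deg (t.2.2.f i) = n ∧
          t.2.1.f i ≫ t.2.2.f i = f.f i) := by
  have hdeg n {a b : Λ (n + 1)} (f : a ⟶ b) := (hcov n).deg_map f
  refine ⟨fun a => (KGs 0).deg_id (a.v 0), fun a b c f g => (KGs 0).deg_comp (f.f 0) (g.f 0),
    fun a b f j => PLimHom.dtilde_eq_deg hdeg f j, fun a b f m n hmn => ?_⟩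
  obtain ⟨t, ht, huniq⟩ := PLimHom.existsUnique_factorisation hdeg f hmn
  exact ⟨t, ⟨(ht 0).1, (ht 0).2.1, PLimHom.ext (funext fun i => (ht i).2.2), ht⟩,
    fun t' ht' => huniq t' ht'.2.2.2⟩

/-- Let `pₙ : Λ_{n+1} → Λₙ` be a sequence of row-finite coverings of
`k`-graphs with no sources.  Then `varprojlim (Λᵢ, pᵢ)` with coordinatewise structure maps
is a small category (this is the `PLimObj.instCategory` instance above), and
`d̃((λᵢ)) := d(λ₁)` defines a functor to `ℕᵏ` which agrees with `d(λⱼ)` for every `j` and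
satisfies the factorisation property, with the factorisations computed coordinatewise. -/
theorem stmt15 {k : ℕ} (Λ : ℕ → Type) [∀ n, SmallCategory (Λ n)]
    (p : ∀ n, Λ (n + 1) ⥤ Λ n) (KGs : ∀ n, KGraph k (Λ n))
    (hcov : ∀ n, IsCovering (KGs (n + 1)) (KGs n) (p n))
    (hfib : ∀ (n : ℕ) (v : Λ n), Finite {w : Λ (n + 1) // (p n).obj w = v})
    (hrow : ∀ (n : ℕ) (v : Λ n) (d : Fin k → ℕ),
      Finite ((b : Λ n) × {f : v ⟶ b // (KGs n).deg f = d}))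
    (hns : ∀ (n : ℕ) (v : Λ n) (d : Fin k → ℕ),
      ∃ (b : Λ n) (f : v ⟶ b), (KGs n).deg f = d) :
    (∀ a : PLimObj Λ p, dtilde KGs (𝟙 a) = 0) ∧
    (∀ (a b c : PLimObj Λ p) (f : a ⟶ b) (g : b ⟶ c),
      dtilde KGs (f ≫ g) = dtilde KGs f + dtilde KGs g) ∧
    (∀ (a b : PLimObj Λ p) (f : a ⟶ b) (j : ℕ), dtilde KGs f = (KGs j).deg (f.f j)) ∧
    (∀ (a b : PLimObj Λ p) (f : a ⟶ b) (m n : Fin k → ℕ), dtilde KGs f = m + n →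
      ∃! t : Σ c : PLimObj Λ p, (a ⟶ c) × (c ⟶ b),
        dtilde KGs t.2.1 = m ∧ dtilde KGs t.2.2 = n ∧ t.2.1 ≫ t.2.2 = f ∧
        ∀ i : ℕ, (KGs i).deg (t.2.1.f i) = m ∧ (KGs i).deg (t.2.2.f i) = n ∧
          t.2.1.f i ≫ t.2.2.f i = f.f i) :=
  stmt15_general Λ p KGs hcov
end
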